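/- arXiv:1610.03287 — 4 statements merged into one kernel-verified Lean document; each statement's English description precedes it below -/
import Mathlib

section
/- For a finite metric space (X,d) with diameter D and p ≥ 1, the map (r,s) ↦ W_p^p(r,s) is Lipschitz on the product of probability simplices: |W_p^p(r,s) − W_p^p(r',s')| ≤ p·D^p·(‖r − r'‖₁ + ‖s − s'‖₁). -/
/-!
A coupling of `(r', s)` is turned into a coupling of `(r, s)` at small extra cost: scale each row
`x` down to mass `min (r x) (r' x)`, then fill the missing row mass `r - min r r'` and the
resulting column deficit, both of total mass at most `‖r - r'‖₁`, by their normalised product.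
The filling costs at most `D ^ p` per unit of mass, so `W_p^p(r, s) ≤ W_p^p(r', s) + D^p ‖r - r'‖₁`.
The second marginal is handled by transposing couplings.
-/

open Finset

def couplings {X : Type*} [Fintype X] (r s : X → ℝ) : Set (X → X → ℝ) :=
  {w | (∀ x x', 0 ≤ w x x') ∧ (∀ x, ∑ x', w x x' = r x) ∧ (∀ x', ∑ x, w x x' = s x')}

noncomputable def Wpp {X : Type*} [Fintype X] (d : X → X → ℝ) (p : ℝ) (r s : X → ℝ) : ℝ :=
  sInf ((fun w => ∑ x, ∑ x', d x x' ^ p * w x x') '' couplings r s)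

section OptimalTransport

variable {X : Type*} [Fintype X]

def transportCost (c w : X → X → ℝ) : ℝ :=
  ∑ x, ∑ x', c x x' * w x x'

noncomputable def optimalCost (c : X → X → ℝ) (r s : X → ℝ) : ℝ :=
  sInf (transportCost c '' couplings r s)

theorem Wpp_eq_optimalCost (d : X → X → ℝ) (p : ℝ) (r s : X → ℝ) :
    Wpp d p r s = optimalCost (fun x x' => d x x' ^ p) r s :=
  rfl

section Couplings

variable {w w₁ w₂ : X → X → ℝ} {a b r s r₁ r₂ s₁ s₂ : X → ℝ}

theorem mem_couplings_rowSum_colSum (hw : ∀ x x', 0 ≤ w x x') :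
    w ∈ couplings (fun x => ∑ x', w x x') (fun x' => ∑ x, w x x') :=
  ⟨hw, fun _ => rfl, fun _ => rfl⟩

theorem add_mem_couplings (h₁ : w₁ ∈ couplings r₁ s₁) (h₂ : w₂ ∈ couplings r₂ s₂) :
    w₁ + w₂ ∈ couplings (r₁ + r₂) (s₁ + s₂) := by
  obtain ⟨h₁0, h₁r, h₁s⟩ := h₁
  obtain ⟨h₂0, h₂r, h₂s⟩ := h₂
  refine ⟨fun x x' => add_nonneg (h₁0 x x') (h₂0 x x'), fun x => ?_, fun x' => ?_⟩
  · simp only [Pi.add_apply, sum_add_distrib, h₁r, h₂r]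
  · simp only [Pi.add_apply, sum_add_distrib, h₁s, h₂s]

theorem swap_mem_couplings (hw : w ∈ couplings r s) : (fun x x' => w x' x) ∈ couplings s r :=
  ⟨fun x x' => hw.1 x' x, hw.2.2, hw.2.1⟩

theorem sum_eq_sum_of_mem_couplings (hw : w ∈ couplings r s) : ∑ x, r x = ∑ x, s x := by
  simp only [← hw.2.1, ← hw.2.2]
  exact sum_comm

theorem nonneg_of_mem_couplings (hw : w ∈ couplings r s) (x : X) : 0 ≤ r x :=
  hw.2.1 x ▸ sum_nonneg fun x' _ => hw.1 x x'

theorem mul_div_sum_mem_couplings (ha : ∀ x, 0 ≤ a x) (hb : ∀ x, 0 ≤ b x)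
    (hab : ∑ x, a x = ∑ x, b x) :
    (fun x x' => a x * b x' / ∑ y, a y) ∈ couplings a b := by
  by_cases h0 : ∑ y, a y = 0
  · have ha0 : ∀ x, a x = 0 := fun x =>
      (sum_eq_zero_iff_of_nonneg fun x _ => ha x).1 h0 x (mem_univ x)
    have hb0 : ∀ x, b x = 0 := fun x =>
      (sum_eq_zero_iff_of_nonneg fun x _ => hb x).1 (hab ▸ h0) x (mem_univ x)
    exact ⟨fun x x' => by simp [ha0], fun x => by simp [ha0], fun x' => by simp [ha0, hb0]⟩
  · refine ⟨fun x x' => div_nonneg (mul_nonneg (ha x) (hb x')) (sum_nonneg fun y _ => ha y),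
      fun x => ?_, fun x' => ?_⟩
    · rw [← sum_div, ← mul_sum, ← hab, mul_div_cancel_right₀ _ h0]
    · rw [← sum_div, ← sum_mul, mul_div_cancel_left₀ _ h0]

end Couplings

section TransportCost

variable {c u w : X → X → ℝ} {a b : X → ℝ} {C : ℝ}

theorem transportCost_add (c w₁ w₂ : X → X → ℝ) :
    transportCost c (w₁ + w₂) = transportCost c w₁ + transportCost c w₂ := by
  simp only [transportCost, Pi.add_apply, mul_add, sum_add_distrib]

theorem transportCost_nonneg (hc : ∀ x x', 0 ≤ c x x') (hw : ∀ x x', 0 ≤ w x x') :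
    0 ≤ transportCost c w :=
  sum_nonneg fun x _ => sum_nonneg fun x' _ => mul_nonneg (hc x x') (hw x x')

theorem transportCost_mono (hc : ∀ x x', 0 ≤ c x x') (huw : ∀ x x', u x x' ≤ w x x') :
    transportCost c u ≤ transportCost c w :=
  sum_le_sum fun x _ => sum_le_sum fun x' _ => mul_le_mul_of_nonneg_left (huw x x') (hc x x')

theorem transportCost_le_of_mem_couplings (hcC : ∀ x x', c x x' ≤ C) (hw : w ∈ couplings a b) :
    transportCost c w ≤ C * ∑ x, a x :=
  calc transportCost c w ≤ ∑ x, ∑ x', C * w x x' :=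
        sum_le_sum fun x _ => sum_le_sum fun x' _ =>
          mul_le_mul_of_nonneg_right (hcC x x') (hw.1 x x')
    _ = C * ∑ x, a x := by simp only [← mul_sum, hw.2.1]

end TransportCost

variable {c w : X → X → ℝ} {r r' s s' : X → ℝ} {C : ℝ}

theorem exists_mem_couplings_transportCost_le {u : X → X → ℝ}
    (hcC : ∀ x x', c x x' ≤ C) (hu : ∀ x x', 0 ≤ u x x')
    (hur : ∀ x, ∑ x', u x x' ≤ r x) (hus : ∀ x', ∑ x, u x x' ≤ s x')
    (hrs : ∑ x, r x = ∑ x, s x) :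
    ∃ w ∈ couplings r s,
      transportCost c w ≤ transportCost c u + C * ∑ x, (r x - ∑ x', u x x') := by
  set a : X → ℝ := fun x => r x - ∑ x', u x x'
  set b : X → ℝ := fun x' => s x' - ∑ x, u x x'
  have hab : ∑ x, a x = ∑ x, b x := by
    simp only [a, b, sum_sub_distrib, hrs, sum_comm (f := fun x x' => u x x')]
  have hfill := mul_div_sum_mem_couplings (fun x => sub_nonneg.2 (hur x))
    (fun x' => sub_nonneg.2 (hus x')) hab
  refine ⟨u + fun x x' => a x * b x' / ∑ y, a y, ?_, ?_⟩
  · convert add_mem_couplings (mem_couplings_rowSum_colSum hu) hfill using 2 <;>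
      funext x <;> simp
  · rw [transportCost_add]
    exact (add_le_add_iff_left _).2 (transportCost_le_of_mem_couplings hcC hfill)

theorem exists_mem_couplings_transportCost_le_add
    (hc : ∀ x x', 0 ≤ c x x') (hcC : ∀ x x', c x x' ≤ C) (hr : ∀ x, 0 ≤ r x)
    (hrr' : ∑ x, r x = ∑ x, r' x) (hw : w ∈ couplings r' s) :
    ∃ w' ∈ couplings r s,
      transportCost c w' ≤ transportCost c w + C * ∑ x, |r x - r' x| := by
  have hr' := nonneg_of_mem_couplings hw
  set q : X → ℝ := fun x => min (r x) (r' x) / r' x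
  have hq0 : ∀ x, 0 ≤ q x := fun x => div_nonneg (le_min (hr x) (hr' x)) (hr' x)
  have hq1 : ∀ x, q x ≤ 1 := fun x => div_le_one_of_le₀ (min_le_right _ _) (hr' x)
  set u : X → X → ℝ := fun x x' => q x * w x x'
  have huw : ∀ x x', u x x' ≤ w x x' := fun x x' => mul_le_of_le_one_left (hw.1 x x') (hq1 x)
  have hur : ∀ x, ∑ x', u x x' = min (r x) (r' x) := by
    intro x
    rw [← mul_sum, hw.2.1]
    rcases (hr' x).eq_or_lt with h | h
    · rw [← h, mul_zero, min_eq_right (hr x)]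
    · exact div_mul_cancel₀ _ h.ne'
  obtain ⟨w', hw', hcost⟩ := exists_mem_couplings_transportCost_le hcC
    (fun x x' => mul_nonneg (hq0 x) (hw.1 x x'))
    (fun x => (hur x).trans_le (min_le_left _ _))
    (fun x' => hw.2.2 x' ▸ sum_le_sum fun x _ => huw x x')
    (hrr'.trans (sum_eq_sum_of_mem_couplings hw))
  refine ⟨w', hw', hcost.trans (add_le_add (transportCost_mono hc huw) ?_)⟩
  rw [mul_sum, mul_sum]
  refine sum_le_sum fun x _ => mul_le_mul_of_nonneg_left ?_ ((hc x x).trans (hcC x x))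
  rw [hur x]
  calc r x - min (r x) (r' x) ≤ max (r x) (r' x) - min (r x) (r' x) :=
        sub_le_sub_right (le_max_left _ _) _
    _ = |r x - r' x| := max_sub_min_eq_abs' _ _

theorem optimalCost_le (hc : ∀ x x', 0 ≤ c x x') (hw : w ∈ couplings r s) :
    optimalCost c r s ≤ transportCost c w :=
  csInf_le ⟨0, by rintro _ ⟨w, hw, rfl⟩; exact transportCost_nonneg hc hw.1⟩
    (Set.mem_image_of_mem _ hw)

theorem optimalCost_comm (hc : ∀ x x', c x x' = c x' x) (r s : X → ℝ) :
    optimalCost c r s = optimalCost c s r := by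
  have hsub : ∀ r s : X → ℝ,
      transportCost c '' couplings r s ⊆ transportCost c '' couplings s r := by
    rintro r s _ ⟨w, hw, rfl⟩
    refine ⟨_, swap_mem_couplings hw, ?_⟩
    rw [transportCost, transportCost, sum_comm]
    exact sum_congr rfl fun x' _ => sum_congr rfl fun x _ => by rw [hc]
  rw [optimalCost, optimalCost, (hsub r s).antisymm (hsub s r)]

theorem optimalCost_le_add_left (hc : ∀ x x', 0 ≤ c x x') (hcC : ∀ x x', c x x' ≤ C)
    (hr : ∀ x, 0 ≤ r x) (hr' : ∀ x, 0 ≤ r' x) (hs : ∀ x, 0 ≤ s x)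
    (hrr' : ∑ x, r x = ∑ x, r' x) (hr's : ∑ x, r' x = ∑ x, s x) :
    optimalCost c r s ≤ optimalCost c r' s + C * ∑ x, |r x - r' x| := by
  rw [← sub_le_iff_le_add]
  refine le_csInf ⟨_, Set.mem_image_of_mem _ (mul_div_sum_mem_couplings hr' hs hr's)⟩ ?_
  rintro _ ⟨w, hw, rfl⟩
  obtain ⟨w', hw', hcost⟩ := exists_mem_couplings_transportCost_le_add hc hcC hr hrr' hw
  exact sub_le_iff_le_add.2 ((optimalCost_le hc hw').trans hcost)

section Lipschitz

variable {m : ℝ} (hc_symm : ∀ x x', c x x' = c x' x) (hc : ∀ x x', 0 ≤ c x x')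
  (hcC : ∀ x x', c x x' ≤ C)
  (hr0 : ∀ x, 0 ≤ r x) (hr : ∑ x, r x = m) (hs0 : ∀ x, 0 ≤ s x) (hs : ∑ x, s x = m)
  (hr'0 : ∀ x, 0 ≤ r' x) (hr' : ∑ x, r' x = m) (hs'0 : ∀ x, 0 ≤ s' x) (hs' : ∑ x, s' x = m)
include hc_symm hc hcC hr0 hr hs0 hs hr'0 hr' hs'0 hs'

theorem optimalCost_le_add :
    optimalCost c r s ≤ optimalCost c r' s' + C * (∑ x, |r x - r' x| + ∑ x, |s x - s' x|) := by
  have hr_step := optimalCost_le_add_left hc hcC hr0 hr'0 hs0 (hr.trans hr'.symm)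
    (hr'.trans hs.symm)
  have hs_step : optimalCost c r' s ≤ optimalCost c r' s' + C * ∑ x, |s x - s' x| := by
    rw [optimalCost_comm hc_symm r', optimalCost_comm hc_symm r']
    exact optimalCost_le_add_left hc hcC hs0 hs'0 hr'0 (hs.trans hs'.symm) (hs'.trans hr'.symm)
  linarith

theorem abs_optimalCost_sub_le :
    |optimalCost c r s - optimalCost c r' s'| ≤
      C * (∑ x, |r x - r' x| + ∑ x, |s x - s' x|) := by
  have h := optimalCost_le_add hc_symm hc hcC hr0 hr hs0 hs hr'0 hr' hs'0 hs'
  have h' := optimalCost_le_add hc_symm hc hcC hr'0 hr' hs'0 hs' hr0 hr hs0 hs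
  simp only [abs_sub_comm (r' _), abs_sub_comm (s' _)] at h'
  rw [abs_sub_le_iff]
  constructor <;> linarith

end Lipschitz

end OptimalTransport

/-- The map `(r,s) ↦ W_p^p(r,s)` is Lipschitz on the product of probability simplices,
with constant `p · D^p` where `D` is the diameter of the finite metric space. -/
theorem Wpp_lipschitz {X : Type*} [Fintype X] [MetricSpace X]
    (p : ℝ) (hp : 1 ≤ p) (r s r' s' : X → ℝ)
    (hr0 : ∀ x, 0 ≤ r x) (hr1 : ∑ x, r x = 1)
    (hs0 : ∀ x, 0 ≤ s x) (hs1 : ∑ x, s x = 1)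
    (hr'0 : ∀ x, 0 ≤ r' x) (hr'1 : ∑ x, r' x = 1)
    (hs'0 : ∀ x, 0 ≤ s' x) (hs'1 : ∑ x, s' x = 1)
    (D : ℝ) (hD : D = Metric.diam (Set.univ : Set X)) :
    |Wpp (fun x x' => dist x x') p r s - Wpp (fun x x' => dist x x') p r' s'| ≤
      p * D ^ p * ((∑ x, |r x - r' x|) + ∑ x, |s x - s' x|) := by
  have hp0 : 0 ≤ p := zero_le_one.trans hp
  have hD0 : 0 ≤ D := hD ▸ Metric.diam_nonneg
  have hdist_le : ∀ x x' : X, dist x x' ^ p ≤ D ^ p := fun x x' =>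
    Real.rpow_le_rpow dist_nonneg (hD ▸ Metric.dist_le_diam_of_mem Set.finite_univ.isBounded
      (Set.mem_univ x) (Set.mem_univ x')) hp0
  simp only [Wpp_eq_optimalCost]
  calc _ ≤ D ^ p * ((∑ x, |r x - r' x|) + ∑ x, |s x - s' x|) :=
        abs_optimalCost_sub_le (fun x x' => by rw [dist_comm])
          (fun x x' => Real.rpow_nonneg dist_nonneg p) hdist_le
          hr0 hr1 hs0 hs1 hr'0 hr'1 hs'0 hs'1
    _ ≤ p * D ^ p * ((∑ x, |r x - r' x|) + ∑ x, |s x - s' x|) := by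
        gcongr
        exact le_mul_of_one_le_left (Real.rpow_nonneg hD0 p) hp
end

section
/- For probability measures μ₁, μ₂, μ₃ on a finite metric space (X,d) with diameter D and p ≥ 1: W_p^p(μ₁,μ₂) − W_p^p(μ₁,μ₃) ≤ p·D^{p−1}·W₁(μ₂,μ₃). -/
/-!
A plan from `μ₁` to `μ₃` and a plan from `μ₂` to `μ₃` glue along `μ₃` into a plan from `μ₁` to
`μ₂`. By convexity of `t ↦ t ^ p` and the triangle inequality,
`d(x,y)^p ≤ d(x,z)^p + p D^(p-1) d(y,z)`, so the `p`-cost of the glued plan is at most the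
`p`-cost of the first plan plus `p D^(p-1)` times the `1`-cost of the second; now take infima.
-/
open Finset

lemma Real.rpow_sub_rpow_le_mul_sub {p a b : ℝ} (hp : 1 ≤ p) (hb : 0 ≤ b) (hba : b ≤ a) :
    a ^ p - b ^ p ≤ p * a ^ (p - 1) * (a - b) := by
  rcases hba.eq_or_lt with rfl | hlt
  · simp
  have hslope := (convexOn_rpow hp).slope_le_of_hasDerivAt hb (hb.trans hlt.le) hlt
    (Real.hasDerivAt_rpow_const (Or.inr hp))
  rwa [slope_def_field, div_le_iff₀ (sub_pos.2 hlt)] at hslope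

lemma Real.rpow_le_rpow_add_mul {p D a b c : ℝ} (hp : 1 ≤ p) (ha : 0 ≤ a) (hb : 0 ≤ b)
    (hc : 0 ≤ c) (habc : a ≤ b + c) (haD : a ≤ D) :
    a ^ p ≤ b ^ p + p * D ^ (p - 1) * c := by
  have hp0 : 0 ≤ p := zero_le_one.trans hp
  have hpD : 0 ≤ p * D ^ (p - 1) := mul_nonneg hp0 (Real.rpow_nonneg (ha.trans haD) _)
  rcases le_or_gt a b with hab | hba
  · have hpow := Real.rpow_le_rpow ha hab hp0
    nlinarith
  · calc a ^ p ≤ b ^ p + p * a ^ (p - 1) * (a - b) := by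
          linarith [Real.rpow_sub_rpow_le_mul_sub hp hb hba.le]
      _ ≤ b ^ p + p * D ^ (p - 1) * c := by
          gcongr
          linarith

section Couplings

variable {X : Type*} [Fintype X] {r s t : X → ℝ}

lemma couplings_nonempty (hr0 : ∀ x, 0 ≤ r x) (hs0 : ∀ x, 0 ≤ s x) (hr1 : ∑ x, r x = 1)
    (hs1 : ∑ x, s x = 1) : (couplings r s).Nonempty :=
  ⟨fun x x' => r x * s x', fun x x' => mul_nonneg (hr0 x) (hs0 x'),
    fun x => by rw [← mul_sum, hs1, mul_one], fun x' => by rw [← sum_mul, hr1, one_mul]⟩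

lemma apply_eq_zero_of_mem_couplings {w : X → X → ℝ} (hw : w ∈ couplings r s) {x' : X}
    (hs : s x' = 0) (x : X) : w x x' = 0 :=
  (sum_eq_zero_iff_of_nonneg fun i _ => hw.1 i x').1 ((hw.2.2 x').trans hs) x (mem_univ x)

/-- Where `t z = 0` the division returns `0`, which is harmless: both plans vanish over such `z`. -/
noncomputable def gluedPlan (w₁₃ w₂₃ : X → X → ℝ) (t : X → ℝ) (x y z : X) : ℝ :=
  w₁₃ x z * w₂₃ y z / t z

variable {w₁₃ w₂₃ : X → X → ℝ}

lemma gluedPlan_nonneg (h₁₃ : w₁₃ ∈ couplings r t) (h₂₃ : w₂₃ ∈ couplings s t) (x y z : X) :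
    0 ≤ gluedPlan w₁₃ w₂₃ t x y z := by
  have ht : 0 ≤ t z := h₂₃.2.2 z ▸ sum_nonneg fun y _ => h₂₃.1 y z
  exact div_nonneg (mul_nonneg (h₁₃.1 x z) (h₂₃.1 y z)) ht

lemma sum_gluedPlan_snd (h₁₃ : w₁₃ ∈ couplings r t) (h₂₃ : w₂₃ ∈ couplings s t) (x z : X) :
    ∑ y, gluedPlan w₁₃ w₂₃ t x y z = w₁₃ x z := by
  simp only [gluedPlan, ← sum_div, ← mul_sum, h₂₃.2.2 z]
  by_cases ht : t z = 0
  · simp [ht, apply_eq_zero_of_mem_couplings h₁₃ ht]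
  · exact mul_div_cancel_right₀ _ ht

lemma sum_gluedPlan_fst (h₁₃ : w₁₃ ∈ couplings r t) (h₂₃ : w₂₃ ∈ couplings s t) (y z : X) :
    ∑ x, gluedPlan w₁₃ w₂₃ t x y z = w₂₃ y z := by
  simp only [gluedPlan, mul_comm (w₁₃ _ z), ← sum_div, ← mul_sum, h₁₃.2.2 z]
  by_cases ht : t z = 0
  · simp [ht, apply_eq_zero_of_mem_couplings h₂₃ ht]
  · exact mul_div_cancel_right₀ _ ht

lemma sum_gluedPlan_mem_couplings (h₁₃ : w₁₃ ∈ couplings r t) (h₂₃ : w₂₃ ∈ couplings s t) :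
    (fun x y => ∑ z, gluedPlan w₁₃ w₂₃ t x y z) ∈ couplings r s := by
  refine ⟨fun x y => sum_nonneg fun z _ => gluedPlan_nonneg h₁₃ h₂₃ x y z, fun x => ?_, fun y => ?_⟩
  · rw [sum_comm]
    simp only [sum_gluedPlan_snd h₁₃ h₂₃]
    exact h₁₃.2.1 x
  · rw [sum_comm]
    simp only [sum_gluedPlan_fst h₁₃ h₂₃]
    exact h₂₃.2.1 y

end Couplings

section Wasserstein

variable {X : Type*} [Fintype X] {d : X → X → ℝ} {p : ℝ} {r s t : X → ℝ}

lemma Wpp_le_cost (hd : ∀ x x', 0 ≤ d x x') {w : X → X → ℝ} (hw : w ∈ couplings r s) :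
    Wpp d p r s ≤ ∑ x, ∑ x', d x x' ^ p * w x x' := by
  refine csInf_le ⟨0, ?_⟩ ⟨w, hw, rfl⟩
  rintro _ ⟨v, hv, rfl⟩
  exact sum_nonneg fun x _ => sum_nonneg fun x' _ =>
    mul_nonneg (Real.rpow_nonneg (hd x x') p) (hv.1 x x')

lemma le_Wpp {a : ℝ} (hne : (couplings r s).Nonempty)
    (h : ∀ w ∈ couplings r s, a ≤ ∑ x, ∑ x', d x x' ^ p * w x x') : a ≤ Wpp d p r s :=
  le_csInf (hne.image _) (by rintro _ ⟨w, hw, rfl⟩; exact h w hw)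

lemma le_mul_Wpp {a c : ℝ} (hc : 0 ≤ c) (hne : (couplings r s).Nonempty)
    (h : ∀ w ∈ couplings r s, a ≤ c * ∑ x, ∑ x', d x x' ^ p * w x x') :
    a ≤ c * Wpp d p r s := by
  rw [Wpp, ← smul_eq_mul, ← Real.sInf_smul_of_nonneg hc]
  exact le_csInf (hne.image _).smul_set (by rintro _ ⟨_, ⟨w, hw, rfl⟩, rfl⟩; exact h w hw)

lemma Wpp_le_cost_add_mul_cost {q c : ℝ} (hd : ∀ x x', 0 ≤ d x x')
    (hdpq : ∀ x y z, d x y ^ p ≤ d x z ^ p + c * d y z ^ q)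
    {w₁₃ w₂₃ : X → X → ℝ} (h₁₃ : w₁₃ ∈ couplings r t) (h₂₃ : w₂₃ ∈ couplings s t) :
    Wpp d p r s ≤
      ∑ x, ∑ z, d x z ^ p * w₁₃ x z + c * ∑ y, ∑ z, d y z ^ q * w₂₃ y z := by
  set π := gluedPlan w₁₃ w₂₃ t
  calc Wpp d p r s ≤ ∑ x, ∑ y, d x y ^ p * ∑ z, π x y z :=
        Wpp_le_cost hd (sum_gluedPlan_mem_couplings h₁₃ h₂₃)
    _ ≤ ∑ x, ∑ y, ∑ z, (d x z ^ p + c * d y z ^ q) * π x y z := by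
        gcongr with x _ y _
        rw [mul_sum]
        refine sum_le_sum fun z _ => ?_
        exact mul_le_mul_of_nonneg_right (hdpq x y z) (gluedPlan_nonneg h₁₃ h₂₃ x y z)
    _ = ∑ x, ∑ y, ∑ z, d x z ^ p * π x y z + c * ∑ x, ∑ y, ∑ z, d y z ^ q * π x y z := by
        simp only [add_mul, sum_add_distrib, mul_sum, mul_assoc]
    _ = ∑ x, ∑ z, d x z ^ p * w₁₃ x z + c * ∑ y, ∑ z, d y z ^ q * w₂₃ y z := by
        congr 1
        · refine sum_congr rfl fun x _ => ?_
          rw [sum_comm]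
          simp only [← mul_sum, π, sum_gluedPlan_snd h₁₃ h₂₃]
        · congr 1
          rw [sum_comm]
          refine sum_congr rfl fun y _ => ?_
          rw [sum_comm]
          simp only [← mul_sum, π, sum_gluedPlan_fst h₁₃ h₂₃]

theorem Wpp_sub_Wpp_le_mul_Wpp {q c : ℝ} (hd : ∀ x x', 0 ≤ d x x') (hc : 0 ≤ c)
    (hdpq : ∀ x y z, d x y ^ p ≤ d x z ^ p + c * d y z ^ q)
    (hrt : (couplings r t).Nonempty) (hst : (couplings s t).Nonempty) :
    Wpp d p r s - Wpp d p r t ≤ c * Wpp d q s t := by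
  refine le_mul_Wpp hc hst fun w₂₃ h₂₃ => ?_
  have hW : Wpp d p r s - c * ∑ y, ∑ z, d y z ^ q * w₂₃ y z ≤ Wpp d p r t :=
    le_Wpp hrt fun w₁₃ h₁₃ => by linarith [Wpp_le_cost_add_mul_cost hd hdpq h₁₃ h₂₃]
  linarith

end Wasserstein

/-- For probability measures `μ₁, μ₂, μ₃` on a finite metric space with diameter `D` and
`p ≥ 1`: `W_p^p(μ₁,μ₂) − W_p^p(μ₁,μ₃) ≤ p · D^(p−1) · W₁(μ₂,μ₃)`. -/
theorem Wpp_diff_le_W1 {X : Type*} [Fintype X] [MetricSpace X]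
    (p : ℝ) (hp : 1 ≤ p) (μ₁ μ₂ μ₃ : X → ℝ)
    (h10 : ∀ x, 0 ≤ μ₁ x) (h11 : ∑ x, μ₁ x = 1)
    (h20 : ∀ x, 0 ≤ μ₂ x) (h21 : ∑ x, μ₂ x = 1)
    (h30 : ∀ x, 0 ≤ μ₃ x) (h31 : ∑ x, μ₃ x = 1)
    (D : ℝ) (hD : D = Metric.diam (Set.univ : Set X)) :
    Wpp (fun x x' => dist x x') p μ₁ μ₂ - Wpp (fun x x' => dist x x') p μ₁ μ₃ ≤
      p * D ^ (p - 1) * Wpp (fun x x' => dist x x') 1 μ₂ μ₃ := by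
  have hdist_le : ∀ x y : X, dist x y ≤ D := fun x y => hD ▸
    Metric.dist_le_diam_of_mem Set.finite_univ.isBounded (Set.mem_univ x) (Set.mem_univ y)
  have hc : 0 ≤ p * D ^ (p - 1) :=
    mul_nonneg (by linarith) (Real.rpow_nonneg (hD ▸ Metric.diam_nonneg) _)
  refine Wpp_sub_Wpp_le_mul_Wpp (fun _ _ => dist_nonneg) hc (fun x y z => ?_)
    (couplings_nonempty h10 h30 h11 h31) (couplings_nonempty h20 h30 h21 h31)
  rw [Real.rpow_one]
  exact Real.rpow_le_rpow_add_mul hp dist_nonneg dist_nonneg dist_nonneg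
    (dist_triangle_right x y z) (hdist_le x y)
end

section
/- Let T be a finite rooted tree with edge weights and induced metric d_T, p ≥ 1, and g ∈ ℝ^X with Σ_x g_x = 0. Then max{ ⟨g,u⟩ : u ∈ ℝ^X, u_x − u_{x'} ≤ d_T(x,x')^p for all x,x' } = Σ_{x ≠ root} |(S_T g)_x| · d_T(x, parent(x))^p, where (S_T g)_x = Σ_{x' descendant of x} g_{x'}. -/
open Finset

open Classical in
/-- Summation over descendants (including the vertex itself). -/
noncomputable def treeS {X : Type*} [Fintype X] (parent : X → X) (u : X → ℝ) (x : X) : ℝ :=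
  ∑ x', if ∃ n, parent^[n] x' = x then u x' else 0

open NNReal in
private lemma two_rpow_aux {p : ℝ} (hp : 1 ≤ p) {a b : ℝ} (ha : 0 ≤ a) (hb : 0 ≤ b) :
    a^p + b^p ≤ (a+b)^p := by
  have h := NNReal.add_rpow_le_rpow_add a.toNNReal b.toNNReal hp
  have h2 : ((a.toNNReal ^ p + b.toNNReal ^ p : ℝ≥0) : ℝ) ≤ (((a.toNNReal + b.toNNReal) ^ p : ℝ≥0) : ℝ) := by
    exact_mod_cast h
  simpa [NNReal.coe_rpow, Real.coe_toNNReal _ ha, Real.coe_toNNReal _ hb,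
    Real.toNNReal_add ha hb, Real.coe_toNNReal _ (add_nonneg ha hb)] using h2

private lemma sum_rpow_aux {p : ℝ} (hp : 1 ≤ p) (l : ℕ) (a : ℕ → ℝ) (ha : ∀ j < l, 0 ≤ a j) :
    ∑ j ∈ Finset.range l, a j ^ p ≤ (∑ j ∈ Finset.range l, a j) ^ p := by
  induction l with
  | zero => simp [Real.zero_rpow (by linarith : p ≠ 0)]
  | succ k ih =>
    rw [Finset.sum_range_succ, Finset.sum_range_succ]
    have h1 : ∑ j ∈ Finset.range k, a j ^ p ≤ (∑ j ∈ Finset.range k, a j)^p :=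
      ih (fun j hj => ha j (by omega))
    have h2 : (∑ j ∈ Finset.range k, a j)^p + a k ^ p ≤ (∑ j ∈ Finset.range k, a j + a k)^p :=
      two_rpow_aux hp (Finset.sum_nonneg fun j hj => ha j (by simpa using Finset.mem_range.mp hj |>.trans_le (Nat.le_succ k) |> fun h => h)) (ha k (by omega))
    linarith

/-- On a finite weighted rooted tree with path metric `dT`, for `g` summing to zero, the
maximum of `⟨g,u⟩` over the dual feasible set `{u : u x − u x' ≤ dT(x,x')^p}` is attained
and equals `Σ_{x ≠ root} |(S_T g)_x| · dT(x, parent x)^p`. -/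
theorem tree_dual_max {X : Type*} [Fintype X] [DecidableEq X]
    (root : X) (parent : X → X) (hroot : parent root = root)
    (hreach : ∀ x, ∃ n, parent^[n] x = root)
    (dT : X → X → ℝ) (p : ℝ) (hp : 1 ≤ p)
    (hsymm : ∀ x y, dT x y = dT y x)
    (hnonneg : ∀ x y, 0 ≤ dT x y)
    (hrefl : ∀ x, dT x x = 0)
    (hpos : ∀ x, x ≠ root → 0 < dT x (parent x))
    (hpath : ∀ x x', ∃ (l : ℕ) (c : ℕ → X), c 0 = x ∧ c l = x' ∧
      (∀ j < l, parent (c (j + 1)) = c j ∨ parent (c j) = c (j + 1)) ∧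
      dT x x' = ∑ j ∈ Finset.range l, dT (c j) (c (j + 1)))
    (g : X → ℝ) (hg : ∑ x, g x = 0) :
    IsGreatest {c | ∃ u : X → ℝ, (∀ x x', u x - u x' ≤ dT x x' ^ p) ∧ c = ∑ x, g x * u x}
      (∑ x ∈ Finset.univ.filter (· ≠ root), |treeS parent g x| * dT x (parent x) ^ p) := by
  classical
  set S : X → ℝ := treeS parent g with hS
  set D : X → ℝ := fun x => dT x (parent x) ^ p with hD
  -- depth function
  have hreach' := hreach
  set dep : X → ℕ := fun x => Nat.find (hreach' x) with hdep
  have hnd : ∀ x, parent^[dep x] x = root := fun x => Nat.find_spec (hreach' x)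
  have hmin : ∀ x m, parent^[m] x = root → dep x ≤ m := fun x m h => Nat.find_min' _ h
  have hdroot : dep root = 0 := Nat.le_zero.mp (hmin root 0 rfl)
  have hzero : ∀ x, dep x = 0 → x = root := fun x h => by simpa [h] using hnd x
  have hdpos : ∀ x, x ≠ root → 0 < dep x := by
    intro x hx
    rcases Nat.eq_zero_or_pos (dep x) with h | h
    · exact absurd (hzero x h) hx
    · exact h
  have hstep : ∀ x, x ≠ root → dep x = dep (parent x) + 1 := by
    intro x hx
    have hpos1 : 0 < dep x := hdpos x hx
    have h1 : dep (parent x) ≤ dep x - 1 := by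
      apply hmin
      have : parent^[dep x - 1 + 1] x = root := by rw [Nat.sub_add_cancel hpos1]; exact hnd x
      rwa [Function.iterate_succ_apply] at this
    have h2 : dep x ≤ dep (parent x) + 1 := by
      apply hmin
      rw [Function.iterate_succ_apply]
      exact hnd (parent x)
    omega
  have hiter : ∀ m x, m ≤ dep x → dep (parent^[m] x) + m = dep x := by
    intro m
    induction m with
    | zero => simp
    | succ k ih =>
      intro x h
      have hx : x ≠ root := by
        intro hx; rw [hx, hdroot] at h; omega
      have hs := hstep x hx
      rw [Function.iterate_succ_apply]
      have := ih (parent x) (by omega)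
      omega
  have hstab : ∀ x m, dep x ≤ m → parent^[m] x = root := by
    intro x m h
    obtain ⟨k, rfl⟩ := Nat.exists_eq_add_of_le h
    rw [Nat.add_comm, Function.iterate_add_apply, hnd x, Function.iterate_fixed hroot]
  -- ancestors of x' (excluding root) are parent^[m] x' for m < dep x'
  have hanc : ∀ (x' : X) (v : X → ℝ),
      ∑ x ∈ univ.filter (fun x => x ≠ root ∧ ∃ m, parent^[m] x' = x), v x
        = ∑ m ∈ range (dep x'), v (parent^[m] x') := by
    intro x' v
    rw [show univ.filter (fun x => x ≠ root ∧ ∃ m, parent^[m] x' = x)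
        = (range (dep x')).image (fun m => parent^[m] x') from ?_]
    · rw [Finset.sum_image]
      intro a ha b hb hab
      have ha' := hiter a x' (le_of_lt (mem_range.mp ha))
      have hb' := hiter b x' (le_of_lt (mem_range.mp hb))
      rw [show parent^[a] x' = parent^[b] x' from hab] at ha'
      omega
    · ext x
      simp only [mem_filter, mem_univ, true_and, mem_image, mem_range]
      constructor
      · rintro ⟨hx, m, rfl⟩
        refine ⟨m, ?_, rfl⟩
        by_contra h
        exact hx (hstab x' m (by omega))
      · rintro ⟨m, hm, rfl⟩
        refine ⟨?_, m, rfl⟩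
        intro h
        have := hiter m x' (le_of_lt hm)
        rw [h, hdroot] at this
        omega
  -- key identity
  have key : ∀ u : X → ℝ,
      ∑ x, g x * u x = ∑ x ∈ univ.filter (· ≠ root), S x * (u x - u (parent x)) := by
    intro u
    have e1 : ∀ x, S x * (u x - u (parent x))
        = ∑ x', (if ∃ m, parent^[m] x' = x then g x' * (u x - u (parent x)) else 0) := by
      intro x
      rw [hS]
      show treeS parent g x * (u x - u (parent x)) = _
      rw [treeS, Finset.sum_mul]
      refine Finset.sum_congr rfl fun x' _ => ?_
      split <;> simp
    calc ∑ x, g x * u x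
        = ∑ x', g x' * (u x' - u root) := by
          rw [eq_comm]
          simp only [mul_sub]
          rw [Finset.sum_sub_distrib, ← Finset.sum_mul, hg, zero_mul, sub_zero]
      _ = ∑ x', g x' * ∑ m ∈ range (dep x'), (u (parent^[m] x') - u (parent^[m+1] x')) := by
          refine Finset.sum_congr rfl fun x' _ => ?_
          rw [Finset.sum_range_sub' (fun m => u (parent^[m] x')) (dep x')]
          simp [hnd x']
      _ = ∑ x', ∑ x ∈ univ.filter (fun x => x ≠ root ∧ ∃ m, parent^[m] x' = x),
            g x' * (u x - u (parent x)) := by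
          refine Finset.sum_congr rfl fun x' _ => ?_
          rw [hanc x' (fun x => g x' * (u x - u (parent x))), Finset.mul_sum]
          refine Finset.sum_congr rfl fun m _ => ?_
          rw [Function.iterate_succ_apply']
      _ = ∑ x', ∑ x ∈ univ.filter (· ≠ root),
            (if ∃ m, parent^[m] x' = x then g x' * (u x - u (parent x)) else 0) := by
          refine Finset.sum_congr rfl fun x' _ => ?_
          rw [Finset.sum_filter]
          rw [Finset.sum_filter]
          refine Finset.sum_congr rfl fun x _ => ?_
          by_cases h1 : x ≠ root <;> by_cases h2 : ∃ m, parent^[m] x' = x <;>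
            simp [h1, h2]
      _ = ∑ x ∈ univ.filter (· ≠ root), S x * (u x - u (parent x)) := by
          rw [Finset.sum_comm]
          exact Finset.sum_congr rfl fun x _ => (e1 x).symm
  have hDnonneg : ∀ x, 0 ≤ D x := fun x => Real.rpow_nonneg (hnonneg _ _) p
  -- the optimal u
  set w : X → ℝ := fun x => (if 0 ≤ S x then (1:ℝ) else -1) * D x with hw
  have hwabs : ∀ x, |w x| = D x := by
    intro x
    by_cases h : 0 ≤ S x <;> simp [hw, h, abs_mul, abs_of_nonneg (hDnonneg x)]
  have hSw : ∀ x, S x * w x = |S x| * D x := by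
    intro x
    by_cases h : 0 ≤ S x
    · rw [abs_of_nonneg h]; simp [hw, h]
    · rw [abs_of_neg (lt_of_not_ge h)]; simp [hw, h]
  set u : X → ℝ := fun x => ∑ m ∈ range (dep x), w (parent^[m] x) with hu
  have huroot : u root = 0 := by simp [hu, hdroot]
  have hustep : ∀ x, x ≠ root → u x = w x + u (parent x) := by
    intro x hx
    rw [hu]
    show ∑ m ∈ range (dep x), w (parent^[m] x) = w x + ∑ m ∈ range (dep (parent x)), w (parent^[m] (parent x))
    rw [hstep x hx, Finset.sum_range_succ' (fun m => w (parent^[m] x)) (dep (parent x)), add_comm]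
    simp [Function.iterate_succ_apply]
  have hΔw : ∀ x, x ≠ root → u x - u (parent x) = w x := fun x hx => by
    rw [hustep x hx]; ring
  have hedge : ∀ a b, parent b = a → |u a - u b| ≤ dT a b ^ p := by
    intro a b hab
    by_cases hb : b = root
    · have ha : a = root := by rw [← hab, hb, hroot]
      rw [ha, hb, sub_self, abs_zero, hrefl, Real.zero_rpow (by linarith : p ≠ 0)]
    · have h1 : u b - u a = w b := by rw [← hab]; exact hΔw b hb
      rw [abs_sub_comm, h1, hwabs b, hD]
      show dT b (parent b) ^ p ≤ dT a b ^ p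
      rw [hab, hsymm b a]
  have hfeas : ∀ x x', u x - u x' ≤ dT x x' ^ p := by
    intro x x'
    obtain ⟨l, c, hc0, hcl, hstepc, hd⟩ := hpath x x'
    have htel : u x - u x' = ∑ j ∈ range l, (u (c j) - u (c (j+1))) := by
      rw [Finset.sum_range_sub' (fun j => u (c j)) l, hc0, hcl]
    calc u x - u x' = ∑ j ∈ range l, (u (c j) - u (c (j+1))) := htel
      _ ≤ ∑ j ∈ range l, |u (c j) - u (c (j+1))| :=
          Finset.sum_le_sum fun j _ => le_abs_self _
      _ ≤ ∑ j ∈ range l, dT (c j) (c (j+1)) ^ p := by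
          refine Finset.sum_le_sum fun j hj => ?_
          rcases hstepc j (mem_range.mp hj) with h | h
          · exact hedge (c j) (c (j+1)) h
          · rw [abs_sub_comm, hsymm]
            exact hedge (c (j+1)) (c j) h
      _ ≤ (∑ j ∈ range l, dT (c j) (c (j+1))) ^ p :=
          sum_rpow_aux hp l _ (fun j _ => hnonneg _ _)
      _ = dT x x' ^ p := by rw [← hd]
  constructor
  · refine ⟨u, hfeas, ?_⟩
    rw [key u]
    refine Finset.sum_congr rfl fun x hx => ?_
    have hx' : x ≠ root := by simpa using (Finset.mem_filter.mp hx).2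
    rw [hΔw x hx', hSw x]
  · rintro c ⟨u', hfeas', rfl⟩
    rw [key u']
    refine Finset.sum_le_sum fun x hx => ?_
    have hx' : x ≠ root := by simpa using (Finset.mem_filter.mp hx).2
    have hΔ : |u' x - u' (parent x)| ≤ D x := by
      rw [abs_le]
      constructor
      · have := hfeas' (parent x) x
        rw [hsymm (parent x) x] at this
        rw [hD]; simp only []
        linarith
      · exact hfeas' x (parent x)
    calc S x * (u' x - u' (parent x)) ≤ |S x * (u' x - u' (parent x))| := le_abs_self _
      _ = |S x| * |u' x - u' (parent x)| := abs_mul _ _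
      _ ≤ |S x| * D x := mul_le_mul_of_nonneg_left hΔ (abs_nonneg _)
end

section
/- Delta method for directionally differentiable maps: let f : ℝ^d → ℝ be Hadamard directionally differentiable at u with derivative f'_u, and let X_n be random vectors with ρ_n(X_n − u) ⇒ X in distribution for some ρ_n → ∞. Then ρ_n(f(X_n) − f(u)) ⇒ f'_u(X). -/
open Filter Topology MeasureTheory

/-- Hadamard directional differentiability of `f` at `u` with (possibly nonlinear)
derivative `f'`. -/
def HadamardDirDiffAt {E F : Type*} [NormedAddCommGroup E] [NormedSpace ℝ E]
    [NormedAddCommGroup F] [NormedSpace ℝ F] (f : E → F) (u : E) (f' : E → F) : Prop :=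
  ∀ (h : E) (t : ℕ → ℝ) (hs : ℕ → E),
    (∀ n, 0 < t n) → Tendsto t atTop (𝓝 0) → Tendsto hs atTop (𝓝 h) →
    Tendsto (fun n => (t n)⁻¹ • (f (u + t n • hs n) - f u)) atTop (𝓝 (f' h))

lemma hadamard_deriv_continuous {E F : Type*} [NormedAddCommGroup E] [NormedSpace ℝ E]
    [NormedAddCommGroup F] [NormedSpace ℝ F] {f : E → F} {u : E} {f' : E → F}
    (hf : HadamardDirDiffAt f u f') : Continuous f' := by
  rw [continuous_iff_seqContinuous]
  intro xs x hxs
  have hinvpos : ∀ m : ℕ, (0:ℝ) < ((m:ℝ)+1)⁻¹ := fun m => by positivity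
  have hinvto : Tendsto (fun m : ℕ => ((m:ℝ)+1)⁻¹) atTop (𝓝 0) :=
    tendsto_one_div_add_atTop_nhds_zero_nat.congr (fun m => by rw [one_div])
  have key : ∀ n : ℕ, ∃ t : ℝ, 0 < t ∧ t ≤ ((n:ℝ)+1)⁻¹ ∧
      dist (t⁻¹ • (f (u + t • xs n) - f u)) (f' (xs n)) < ((n:ℝ)+1)⁻¹ := by
    intro n
    have h1 := hf (xs n) (fun m => ((m:ℝ)+1)⁻¹) (fun _ => xs n) hinvpos hinvto tendsto_const_nhds
    have h2 : ∀ᶠ m : ℕ in atTop,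
        dist ((((m:ℝ)+1)⁻¹)⁻¹ • (f (u + ((m:ℝ)+1)⁻¹ • xs n) - f u)) (f' (xs n)) < ((n:ℝ)+1)⁻¹ :=
      h1.eventually (Metric.ball_mem_nhds _ (hinvpos n)) |>.mono (fun m hm => hm)
    have h3 : ∀ᶠ m : ℕ in atTop, ((m:ℝ)+1)⁻¹ ≤ ((n:ℝ)+1)⁻¹ := by
      filter_upwards [eventually_ge_atTop n] with m hm
      exact inv_anti₀ (by positivity) (by exact_mod_cast Nat.add_le_add_right hm 1)
    obtain ⟨m, hm1, hm2⟩ := (h2.and h3).exists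
    exact ⟨((m:ℝ)+1)⁻¹, hinvpos m, hm2, hm1⟩
  choose t ht0 htle hdist using key
  have htto : Tendsto t atTop (𝓝 0) :=
    squeeze_zero (fun n => (ht0 n).le) htle hinvto
  have h2 := hf x t xs ht0 htto hxs
  refine h2.congr_dist ?_
  exact squeeze_zero (fun n => dist_nonneg) (fun n => (hdist n).le) hinvto

lemma unif_compact {α : Type*} [PseudoMetricSpace α] {K : Set α} (hK : IsCompact K)
    {g : ℕ → α → ℝ} {G : α → ℝ} (hG : Continuous G)
    (hcc : ∀ (x : α) (xs : ℕ → α), Tendsto xs atTop (𝓝 x) →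
      Tendsto (fun n => g n (xs n)) atTop (𝓝 (G x)))
    {ε : ℝ} (hε : 0 < ε) : ∀ᶠ n in atTop, ∀ x ∈ K, |g n x - G x| < ε := by
  by_contra hcon
  rw [Filter.not_eventually] at hcon
  have hcon' : ∃ᶠ n in atTop, ∃ x, x ∈ K ∧ ε ≤ |g n x - G x| := by
    refine hcon.mono ?_
    intro n hn
    push_neg at hn
    obtain ⟨x, hx, h⟩ := hn
    exact ⟨x, hx, h⟩
  obtain ⟨φ, hφmono, hφ⟩ := extraction_of_frequently_atTop hcon'
  choose xk hxkK hxkge using hφ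
  obtain ⟨a, haK, ψ, hψmono, hψ⟩ := hK.tendsto_subseq hxkK
  set σ : ℕ → ℕ := φ ∘ ψ with hσ
  have hσmono : StrictMono σ := hφmono.comp hψmono
  classical
  set y : ℕ → α := fun n => if h : ∃ k, σ k = n then xk (ψ (Classical.choose h)) else a with hy
  have hyval : ∀ k, y (σ k) = xk (ψ k) := by
    intro k
    have hex : ∃ j, σ j = σ k := ⟨k, rfl⟩
    have : Classical.choose hex = k := hσmono.injective (Classical.choose_spec hex)
    simp only [hy, dif_pos hex, this]
  have hyto : Tendsto y atTop (𝓝 a) := by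
    rw [Metric.tendsto_atTop]
    intro δ hδ
    obtain ⟨K₀, hK₀⟩ := Metric.tendsto_atTop.mp hψ δ hδ
    refine ⟨σ K₀, fun n hn => ?_⟩
    by_cases hex : ∃ k, σ k = n
    · have hk := Classical.choose_spec hex
      have : K₀ ≤ Classical.choose hex := by
        by_contra hlt
        push_neg at hlt
        have := hσmono hlt
        omega
      have := hK₀ _ this
      simpa [hy, dif_pos hex] using this
    · simp [hy, dif_neg hex, hδ]
  have h1 : Tendsto (fun k => g (σ k) (y (σ k))) atTop (𝓝 (G a)) :=
    (hcc a y hyto).comp hσmono.tendsto_atTop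
  have h2 : Tendsto (fun k => G (xk (ψ k))) atTop (𝓝 (G a)) :=
    (hG.tendsto a).comp hψ
  have h3 : Tendsto (fun k => |g (σ k) (xk (ψ k)) - G (xk (ψ k))|) atTop (𝓝 0) := by
    have := h1.sub h2
    simp only [hyval] at this
    simpa using this.abs
  have h4 : ∀ k, ε ≤ |g (σ k) (xk (ψ k)) - G (xk (ψ k))| := fun k => hxkge (ψ k)
  have := le_of_tendsto_of_tendsto' tendsto_const_nhds h3 h4
  linarith

noncomputable def cutoff {α : Type*} [NormedAddCommGroup α] (R : ℝ) :
    BoundedContinuousFunction α ℝ :=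
  BoundedContinuousFunction.mkOfBound
    ⟨fun x => min 1 (max 0 (‖x‖ - R)), by
      exact continuous_const.min ((continuous_const.max (continuous_norm.sub continuous_const)))⟩ 1 (by
      intro x y
      rw [Real.dist_eq]
      have h1 : ∀ z : α, 0 ≤ min 1 (max 0 (‖z‖ - R)) := fun z =>
        le_min (by norm_num) (le_max_left _ _)
      have h2 : ∀ z : α, min 1 (max 0 (‖z‖ - R)) ≤ 1 := fun z => min_le_left _ _
      rw [abs_sub_le_iff]
      constructor <;> simp only [ContinuousMap.coe_mk] <;> linarith [h1 x, h2 x, h1 y, h2 y])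

lemma cutoff_apply {α : Type*} [NormedAddCommGroup α] (R : ℝ) (x : α) :
    cutoff R x = min 1 (max 0 (‖x‖ - R)) := rfl

lemma cutoff_nonneg {α : Type*} [NormedAddCommGroup α] (R : ℝ) (x : α) :
    0 ≤ cutoff R x := le_min (by norm_num) (le_max_left _ _)

lemma cutoff_le_one {α : Type*} [NormedAddCommGroup α] (R : ℝ) (x : α) :
    cutoff R x ≤ 1 := min_le_left _ _

lemma cutoff_eq_one {α : Type*} [NormedAddCommGroup α] {R : ℝ} {x : α} (h : R + 1 ≤ ‖x‖) :
    cutoff R x = 1 := by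
  rw [cutoff_apply]
  exact min_eq_left (le_max_of_le_right (by linarith))

lemma cutoff_eq_zero {α : Type*} [NormedAddCommGroup α] {R : ℝ} {x : α} (h : ‖x‖ ≤ R) :
    cutoff R x = 0 := by
  rw [cutoff_apply]
  have : max 0 (‖x‖ - R) = 0 := max_eq_left (by linarith)
  rw [this]
  exact min_eq_right (by norm_num)

lemma integrable_of_bounded_meas {Ω : Type*} [MeasurableSpace Ω] (μ : Measure Ω)
    [IsProbabilityMeasure μ] {h : Ω → ℝ} (hm : Measurable h) {M : ℝ} (hb : ∀ ω, |h ω| ≤ M) :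
    Integrable h μ :=
  Integrable.mono' (integrable_const M) hm.aestronglyMeasurable
    (Eventually.of_forall (fun ω => by simpa [Real.norm_eq_abs] using hb ω))

/-- Delta method for directionally differentiable maps: if `f` is Hadamard directionally
differentiable at `u` and `ρ_n (X_n − u) ⇒ X` in distribution with `ρ_n → ∞`, then
`ρ_n (f(X_n) − f(u)) ⇒ f'_u(X)`.  Convergence in distribution is expressed through
integrals of bounded continuous functions. -/
theorem delta_method_hadamard {d : ℕ}
    {Ω : Type*} {mΩ : MeasurableSpace Ω} (μ : Measure Ω) [IsProbabilityMeasure μ]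
    (f : (Fin d → ℝ) → ℝ) (u : Fin d → ℝ) (f' : (Fin d → ℝ) → ℝ)
    (hf : HadamardDirDiffAt f u f') (hfm : Measurable f)
    (X : ℕ → Ω → Fin d → ℝ) (hXm : ∀ n, Measurable (X n))
    (Z : Ω → Fin d → ℝ) (hZm : Measurable Z)
    (ρ : ℕ → ℝ) (hρpos : ∀ n, 0 < ρ n) (hρ : Tendsto ρ atTop atTop)
    (hconv : ∀ φ : BoundedContinuousFunction (Fin d → ℝ) ℝ,
      Tendsto (fun n => ∫ ω, φ (ρ n • (X n ω - u)) ∂μ) atTop (𝓝 (∫ ω, φ (Z ω) ∂μ))) :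
    ∀ ψ : BoundedContinuousFunction ℝ ℝ,
      Tendsto (fun n => ∫ ω, ψ (ρ n * (f (X n ω) - f u)) ∂μ) atTop
        (𝓝 (∫ ω, ψ (f' (Z ω)) ∂μ)) := by
  intro ψ
  have hρ0 : ∀ n, (ρ n : ℝ) ≠ 0 := fun n => (hρpos n).ne'
  have hf'c : Continuous f' := hadamard_deriv_continuous hf
  set g : ℕ → (Fin d → ℝ) → ℝ := fun n x => ρ n * (f (u + (ρ n)⁻¹ • x) - f u) with hgdef
  have hkey : ∀ n ω, ρ n * (f (X n ω) - f u) = g n (ρ n • (X n ω - u)) := by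
    intro n ω
    have harg : u + (ρ n)⁻¹ • (ρ n • (X n ω - u)) = X n ω := by
      rw [smul_smul, inv_mul_cancel₀ (hρ0 n), one_smul, add_sub_cancel]
    simp only [hgdef, harg]
  have gcc : ∀ (x : Fin d → ℝ) (xs : ℕ → Fin d → ℝ), Tendsto xs atTop (𝓝 x) →
      Tendsto (fun n => g n (xs n)) atTop (𝓝 (f' x)) := by
    intro x xs hxs
    have h1 := hf x (fun n => (ρ n)⁻¹) xs (fun n => inv_pos.mpr (hρpos n))
      hρ.inv_tendsto_atTop hxs
    refine h1.congr (fun n => ?_)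
    simp only [hgdef, inv_inv, smul_eq_mul]
  have hcc : ∀ (x : Fin d → ℝ) (xs : ℕ → Fin d → ℝ), Tendsto xs atTop (𝓝 x) →
      Tendsto (fun n => ψ (g n (xs n))) atTop (𝓝 (ψ (f' x))) :=
    fun x xs hxs => (ψ.continuous.tendsto _).comp (gcc x xs hxs)
  have HC : Continuous (fun x : Fin d → ℝ => ψ (f' x)) := ψ.continuous.comp hf'c
  have hB : Tendsto (fun n => ∫ ω, ψ (f' (ρ n • (X n ω - u))) ∂μ) atTop
      (𝓝 (∫ ω, ψ (f' (Z ω)) ∂μ)) := by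
    have := hconv (ψ.compContinuous ⟨f', hf'c⟩)
    simpa only [BoundedContinuousFunction.coe_compContinuous, ContinuousMap.coe_mk,
      Function.comp_apply] using this
  set M := ‖ψ‖ with hM
  have hMnn : (0:ℝ) ≤ M := norm_nonneg _
  have hψb : ∀ y : ℝ, |ψ y| ≤ M := fun y => by
    simpa [Real.norm_eq_abs] using ψ.norm_coe_le_norm y
  have Tmeas : ∀ n, Measurable (fun ω => ρ n • (X n ω - u)) :=
    fun n => ((hXm n).sub measurable_const).const_smul (ρ n)
  have hintA : ∀ n, Integrable (fun ω => ψ (ρ n * (f (X n ω) - f u))) μ := by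
    intro n
    exact integrable_of_bounded_meas μ
      (ψ.continuous.measurable.comp
        ((measurable_const.mul ((hfm.comp (hXm n)).sub measurable_const))))
      (fun ω => hψb _)
  have hintB : ∀ n, Integrable (fun ω => ψ (f' (ρ n • (X n ω - u)))) μ := by
    intro n
    exact integrable_of_bounded_meas μ
      ((ψ.continuous.comp hf'c).measurable.comp (Tmeas n)) (fun ω => hψb _)
  have hdiff : Tendsto (fun n => (∫ ω, ψ (ρ n * (f (X n ω) - f u)) ∂μ)
      - ∫ ω, ψ (f' (ρ n • (X n ω - u))) ∂μ) atTop (𝓝 0) := by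
    rw [NormedAddCommGroup.tendsto_nhds_zero]
    intro ε hε
    set ε₀ := ε / (2 + 4 * M) with hε₀def
    have hε₀pos : 0 < ε₀ := div_pos hε (by linarith)
    have hεeq : ε = ε₀ * (2 + 4 * M) := by
      rw [hε₀def]; field_simp
    have hRlim : Tendsto (fun R : ℕ => ∫ ω, cutoff (R:ℝ) (Z ω) ∂μ) atTop (𝓝 0) := by
      have h0 : (0:ℝ) = ∫ ω, (0:ℝ) ∂μ := by simp
      rw [h0]
      apply tendsto_integral_of_dominated_convergence (bound := fun _ => (1:ℝ))
      · intro R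
        exact ((cutoff (R:ℝ)).continuous.measurable.comp hZm).aestronglyMeasurable
      · exact integrable_const 1
      · intro R
        filter_upwards with ω
        rw [Real.norm_eq_abs, abs_of_nonneg (cutoff_nonneg _ _)]
        exact cutoff_le_one _ _
      · filter_upwards with ω
        obtain ⟨N, hN⟩ := exists_nat_ge ‖Z ω‖
        refine tendsto_const_nhds.congr' ?_
        filter_upwards [eventually_ge_atTop N] with R hR
        exact (cutoff_eq_zero (le_trans hN (by exact_mod_cast hR))).symm
    obtain ⟨R, hR⟩ : ∃ R : ℕ, ∫ ω, cutoff (R:ℝ) (Z ω) ∂μ < ε₀ :=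
      (hRlim.eventually_lt_const hε₀pos).exists
    have hKcmp : IsCompact (Metric.closedBall (0 : Fin d → ℝ) ((R:ℝ)+1)) :=
      isCompact_closedBall _ _
    have hunif := unif_compact (g := fun n x => ψ (g n x)) hKcmp HC hcc hε₀pos
    have hTcut : ∀ᶠ n in atTop, ∫ ω, cutoff (R:ℝ) (ρ n • (X n ω - u)) ∂μ < ε₀ :=
      (hconv (cutoff (R:ℝ))).eventually_lt_const hR
    have hintCut : ∀ n, Integrable (fun ω => cutoff (R:ℝ) (ρ n • (X n ω - u))) μ := by
      intro n
      refine integrable_of_bounded_meas μ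
        ((cutoff (R:ℝ)).continuous.measurable.comp (Tmeas n)) (M := 1) (fun ω => ?_)
      rw [abs_of_nonneg (cutoff_nonneg _ _)]
      exact cutoff_le_one _ _
    filter_upwards [hunif, hTcut] with n h1 h2
    have hptw : ∀ ω, ‖ψ (ρ n * (f (X n ω) - f u)) - ψ (f' (ρ n • (X n ω - u)))‖
        ≤ ε₀ + (2*M) * cutoff (R:ℝ) (ρ n • (X n ω - u)) := by
      intro ω
      set x := ρ n • (X n ω - u) with hx
      rw [hkey n ω, Real.norm_eq_abs]
      by_cases hxK : ‖x‖ ≤ (R:ℝ)+1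
      · have hmem : x ∈ Metric.closedBall (0 : Fin d → ℝ) ((R:ℝ)+1) := by
          rwa [mem_closedBall_zero_iff]
        have hlt := (h1 x hmem).le
        have hc : 0 ≤ (2*M) * cutoff (R:ℝ) x :=
          mul_nonneg (by linarith) (cutoff_nonneg _ _)
        linarith
      · push_neg at hxK
        rw [cutoff_eq_one hxK.le, mul_one]
        have ha := hψb (g n x)
        have hb := hψb (f' x)
        have htri : |ψ (g n x) - ψ (f' x)| ≤ |ψ (g n x)| + |ψ (f' x)| := by
          rw [sub_eq_add_neg]
          exact (abs_add_le _ _).trans (by rw [abs_neg])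
        linarith
    rw [← integral_sub (hintA n) (hintB n)]
    refine lt_of_le_of_lt (norm_integral_le_integral_norm _) ?_
    have hintRHS : Integrable
        (fun ω => ε₀ + (2*M) * cutoff (R:ℝ) (ρ n • (X n ω - u))) μ :=
      (integrable_const ε₀).add ((hintCut n).const_mul (2*M))
    calc ∫ ω, ‖ψ (ρ n * (f (X n ω) - f u)) - ψ (f' (ρ n • (X n ω - u)))‖ ∂μ
        ≤ ∫ ω, (ε₀ + (2*M) * cutoff (R:ℝ) (ρ n • (X n ω - u))) ∂μ :=
          integral_mono ((hintA n).sub (hintB n)).norm hintRHS hptw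
      _ = ε₀ + (2*M) * ∫ ω, cutoff (R:ℝ) (ρ n • (X n ω - u)) ∂μ := by
          rw [integral_add (integrable_const ε₀) ((hintCut n).const_mul (2*M)),
            integral_const, integral_const_mul]
          simp
      _ < ε := by
          have hc0 : 0 ≤ ∫ ω, cutoff (R:ℝ) (ρ n • (X n ω - u)) ∂μ :=
            integral_nonneg (fun ω => cutoff_nonneg _ _)
          nlinarith
  have hfin := hdiff.add hB
  simpa using hfin
end
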